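/- arXiv:1201.6116 — 4 statements merged into one kernel-verified Lean document; each statement's English description precedes it below -/
import Mathlib

section
/- The generating function D(z) = sum_n D_n z^n, where D_n = sum_{k=0}^n binomial(n-k,k)^2, satisfies D(z)^2 * (z^4 - 2z^3 - z^2 - 2z + 1) = 1; equivalently D(z) = 1/sqrt(z^4 - 2z^3 - z^2 - 2z + 1) as formal power series. -/
/-!
Writing `m = n - k`, the generating function is the diagonal `x = z` of the bivariate series
`F(x, z) = ∑ₘ Lₘ(x) zᵐ` with `Lₘ(x) = ∑ₖ C(m, k)² xᵏ`. Coefficientwise, the `Lₘ` satisfy the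
three-term recurrence `(m + 1) Lₘ₊₁ = (2m + 1)(1 + x) Lₘ - m (1 - x)² Lₘ₋₁` of the Legendre
polynomials, so `Q F_z = -(Q_z / 2) F` with `Q = 1 - 2(1 + x) z + (1 - x)² z²`; hence
`F² Q` has zero `z`-derivative and equals its constant term `1`. Setting `x = z` turns `Q` into
`z⁴ - 2z³ - z² - 2z + 1`.
-/

open PowerSeries

theorem Nat.choose_sq_recurrence {R : Type*} [CommRing R] (m j : ℕ) :
    ((m + 2) * (m + 2).choose (j + 2) ^ 2 : R) =
      (2 * m + 3) * ((m + 1).choose (j + 2) ^ 2 + (m + 1).choose (j + 1) ^ 2)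
        - (m + 1) * (m.choose (j + 2) ^ 2 - 2 * m.choose (j + 1) ^ 2 + m.choose j ^ 2) := by
  have r₁ := congrArg (Nat.cast : ℕ → R) (Nat.add_one_mul_choose_eq m j)
  have r₂ := congrArg (Nat.cast : ℕ → R) (Nat.add_one_mul_choose_eq m (j + 1))
  simp only [Nat.choose_succ_succ'] at r₁ r₂ ⊢
  push_cast at r₁ r₂ ⊢
  linear_combination 2 * (m.choose (j + 1) + m.choose (j + 2) : R) * r₁
    - 2 * (m.choose j + m.choose (j + 1) : R) * r₂

namespace PowerSeries

section CommRing

variable {R : Type*} [CommRing R]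

theorem sq_mul_eq_one_of_ode [IsAddTorsionFree R] {f Q : R⟦X⟧}
    (hode : 2 * Q * d⁄dX R f + d⁄dX R Q * f = 0)
    (h0 : constantCoeff f ^ 2 * constantCoeff Q = 1) :
    f ^ 2 * Q = 1 := by
  refine derivative.ext ?_ (by simpa using h0)
  rw [Derivation.map_one_eq_zero, Derivation.leibniz, Derivation.leibniz_pow]
  simp only [smul_eq_mul, nsmul_eq_mul]
  linear_combination f * hode

theorem mk_sq_mul_eq_one_of_recurrence [IsAddTorsionFree R] (A B : R) {L : ℕ → R}
    (h0 : L 0 = 1) (h1 : L 1 = A)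
    (hrec : ∀ m : ℕ, (m + 2 : R) * L (m + 2) = (2 * m + 3) * A * L (m + 1) - (m + 1) * B * L m) :
    mk L ^ 2 * (1 - 2 * C A * X + C B * X ^ 2) = 1 := by
  have h2 : (2 : R⟦X⟧) = C 2 := (map_ofNat C 2).symm
  have hQ : d⁄dX R (1 - 2 * C A * X + C B * X ^ 2) = 2 * (C B * X - C A) := by
    simp only [h2, map_add, map_sub, Derivation.map_one_eq_zero, Derivation.leibniz,
      Derivation.leibniz_pow, derivative_X, derivative_C, smul_eq_mul, nsmul_eq_mul,
      Nat.cast_ofNat, Nat.add_one_sub_one, pow_one, mul_one, mul_zero, add_zero, zero_sub]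
    ring
  have hlegendre :
      (1 - 2 * C A * X + C B * X ^ 2) * d⁄dX R (mk L) = (C A - C B * X) * mk L := by
    rw [h2]
    ext (_ | _ | n) <;>
      simp only [pow_two, mul_assoc, mul_add, add_mul, sub_mul, one_mul, map_add, map_sub,
        map_mul, coeff_C_mul, coeff_succ_X_mul, coeff_mk, coeff_zero_eq_constantCoeff_apply,
        constantCoeff_X, zero_mul, mul_zero, coeff_derivative]
    · simp [h0, h1]
    · push_cast
      linear_combination hrec 0
    · have := hrec (n + 1)
      push_cast at this ⊢
      linear_combination this
  refine sq_mul_eq_one_of_ode ?_ (by simp [h0])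
  rw [hQ]
  linear_combination 2 * hlegendre

variable (R) in
noncomputable def chooseSq (m : ℕ) : R⟦X⟧ := mk fun k => (m.choose k : R) ^ 2

theorem chooseSq_zero : chooseSq R 0 = 1 := by
  ext (_ | _) <;> simp [chooseSq, coeff_one]

theorem chooseSq_one : chooseSq R 1 = 1 + X := by
  ext (_ | _ | _) <;> simp [chooseSq, coeff_one, coeff_X, Nat.choose_eq_zero_of_lt]

theorem chooseSq_recurrence (m : ℕ) :
    (m + 2 : R⟦X⟧) * chooseSq R (m + 2) =
      (2 * m + 3) * (1 + X : R⟦X⟧) * chooseSq R (m + 1)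
        - (m + 1) * (1 - X : R⟦X⟧) ^ 2 * chooseSq R m := by
  rw [show ((m : R⟦X⟧) + 2) = C ((m : R) + 2) by simp [map_ofNat C 2],
    show (2 * (m : R⟦X⟧) + 3) = C (2 * (m : R) + 3) by simp [map_ofNat C 2, map_ofNat C 3],
    show ((m : R⟦X⟧) + 1) = C ((m : R) + 1) by simp]
  ext (_ | _ | j) <;>
    simp only [chooseSq, pow_two, mul_assoc, mul_add, add_mul, mul_sub, sub_mul, one_mul,
      map_add, map_sub, map_mul, coeff_C_mul, coeff_succ_X_mul, coeff_mk,
      coeff_zero_eq_constantCoeff_apply, constantCoeff_X, zero_mul, mul_zero]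
  · simp only [Nat.choose_zero_right, Nat.cast_one]
    ring
  · simp only [zero_add, Nat.choose_one_right, Nat.choose_zero_right]
    push_cast
    ring
  · linear_combination Nat.choose_sq_recurrence (R := R) m j

end CommRing

section CommSemiring

variable {R : Type*} [CommSemiring R]

variable (R) in
/-- The substitution `f(x, z) ↦ f(z, z)`, where the coefficients of `f` are power series in `x`. -/
noncomputable def diagonal : PowerSeries (PowerSeries R) →ₐ[R] PowerSeries R :=
  (MvPowerSeries.rename fun _ : Option Unit => ()).comp
    (MvPowerSeries.optionEquivLeft Unit R).symm.toAlgHom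

theorem coeff_diagonal (f : PowerSeries (PowerSeries R)) (n : ℕ) :
    coeff n (diagonal R f) =
      ∑ p ∈ Finset.HasAntidiagonal.antidiagonal n, coeff p.1 (coeff p.2 f) := by
  have mem_fiber (x : Option Unit →₀ ℕ) :
      Finsupp.mapDomain (fun _ => ()) x = Finsupp.single () n ↔ x (some ()) + x none = n := by
    rw [Finsupp.unique_ext_iff]
    simp [Finsupp.mapDomain, Finsupp.sum_fintype, add_comm]
  rw [diagonal, AlgHom.comp_apply, coeff, MvPowerSeries.coeff_rename]
  refine Finset.sum_nbij' (fun x => (x (some ()), x none))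
    (fun p => (Finsupp.single () p.1).optionElim p.2) ?_ ?_ ?_ ?_ ?_
  · simp [mem_fiber]
  · simp [mem_fiber]
  · intro x _
    ext (_ | _) <;> simp
  · intro p _
    simp
  · intro x _
    have hx : x = x.some.optionElim (x none) := by ext (_ | _) <;> simp
    have hs : x.some = Finsupp.single () (x (some ())) := by ext; simp
    conv_lhs => rw [hx, ← MvPowerSeries.coeff_coeff_optionEquivLeft]
    simp only [AlgEquiv.toAlgHom_apply, AlgEquiv.apply_symm_apply, hs]
    rfl

theorem diagonal_X : diagonal R X = X := by
  have h : (MvPowerSeries.optionEquivLeft Unit R).symm X = MvPowerSeries.X none :=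
    (AlgEquiv.symm_apply_eq _).2 MvPowerSeries.optionEquivLeft_X_none.symm
  rw [diagonal, AlgHom.comp_apply, AlgEquiv.toAlgHom_apply, h, MvPowerSeries.rename_X]
  rfl

theorem diagonal_C_X : diagonal R (C X) = X := by
  have h : (MvPowerSeries.optionEquivLeft Unit R).symm (C X) = MvPowerSeries.X (some ()) :=
    (AlgEquiv.symm_apply_eq _).2 (MvPowerSeries.optionEquivLeft_X_some ()).symm
  rw [diagonal, AlgHom.comp_apply, AlgEquiv.toAlgHom_apply, h, MvPowerSeries.rename_X]
  rfl

end CommSemiring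

end PowerSeries

open PowerSeries in
theorem stmt_4 :
    (PowerSeries.mk fun n => ∑ k ∈ Finset.range (n + 1), ((n - k).choose k : ℚ) ^ 2) ^ 2 *
      ((X : PowerSeries ℚ) ^ 4 - 2 * X ^ 3 - X ^ 2 - 2 * X + 1) = 1 := by
  have : IsAddTorsionFree ℚ⟦X⟧ := IsAddTorsionFree.of_module_rat _
  have hF := mk_sq_mul_eq_one_of_recurrence (1 + X : ℚ⟦X⟧) ((1 - X) ^ 2)
    chooseSq_zero chooseSq_one (chooseSq_recurrence (R := ℚ))
  have hD : diagonal ℚ (mk (chooseSq ℚ)) =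
      mk fun n => ∑ k ∈ Finset.range (n + 1), ((n - k).choose k : ℚ) ^ 2 := by
    ext n
    rw [coeff_diagonal, Finset.Nat.sum_antidiagonal_eq_sum_range_succ
      (fun i j => coeff i (coeff j (mk (chooseSq ℚ))))]
    simp [chooseSq]
  have hdiag := congrArg (diagonal ℚ) hF
  simp only [map_mul, map_pow, map_add, map_sub, map_one, map_ofNat, diagonal_X, diagonal_C_X,
    hD] at hdiag
  linear_combination hdiag
end

section
/- Let (X_n) be integer-valued random variables with means μ_n and variances σ_n² → ∞, and let g be a probability density with sup_x |P(X_n = ⌊μ_n + x σ_n⌋)·σ_n − g(x)| → 0 as n → ∞ (uniformly in x). If X_n^{(1)}, ..., X_n^{(m)} are m independent copies of X_n, then σ_n^{m−1} · P(X_n^{(1)} = X_n^{(2)} = ... = X_n^{(m)}) → ∫_{−∞}^{∞} g(x)^m dx as n → ∞. -/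
/-!
Write `p k = P(X_n = k)`. By independence, `P(X⁽¹⁾ = ⋯ = X⁽ᵐ⁾) = ∑ₖ p k ^ m`. The step function
`f x = σ_n * p ⌊μ_n + x σ_n⌋` is constant on intervals of length `1 / σ_n`, so `∫ f = ∑ₖ p k = 1`
and `∫ f ^ m = σ_n ^ (m - 1) * ∑ₖ p k ^ m`. The local limit hypothesis says `|f - g| ≤ ε`
everywhere; in particular `g` is bounded, by `D` say. For `0 ≤ x, y ≤ D`,
`|x ^ m - y ^ m| ≤ m D ^ (m - 2) (x + y) |x - y|`; the factor `x + y` keeps the bound integrable,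
and integrating gives `|∫ f ^ m - ∫ g ^ m| ≤ 2 m D ^ (m - 2) ε`.
-/

open MeasureTheory ProbabilityTheory Filter Topology

lemma abs_pow_sub_pow_le_of_le {m : ℕ} (hm : 2 ≤ m) {D x y : ℝ} (hx : 0 ≤ x) (hy : 0 ≤ y)
    (hxD : x ≤ D) (hyD : y ≤ D) :
    |x ^ m - y ^ m| ≤ m * D ^ (m - 2) * (x + y) * |x - y| := by
  have hmax : max |x| |y| ^ (m - 1) ≤ D ^ (m - 2) * (x + y) := by
    rw [abs_of_nonneg hx, abs_of_nonneg hy, show m - 1 = m - 2 + 1 by omega, pow_succ]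
    have hD : 0 ≤ D := hx.trans hxD
    gcongr
    · exact max_le hxD hyD
    · exact max_le (by linarith) (by linarith)
  calc |x ^ m - y ^ m| ≤ |x - y| * m * max |x| |y| ^ (m - 1) := abs_pow_sub_pow_le ..
    _ ≤ |x - y| * m * (D ^ (m - 2) * (x + y)) := by gcongr
    _ = m * D ^ (m - 2) * (x + y) * |x - y| := by ring

section Integrals

variable {α : Type*} [MeasurableSpace α] {μ : Measure α}

lemma MeasureTheory.Integrable.pow_of_abs_le {f : α → ℝ} (hf : Integrable f μ) {D : ℝ}
    (hfD : ∀ x, |f x| ≤ D) {m : ℕ} (hm : m ≠ 0) : Integrable (fun x => f x ^ m) μ := by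
  have hbdd : ∀ᵐ x ∂μ, ‖f x ^ (m - 1)‖ ≤ D ^ (m - 1) := ae_of_all _ fun x => by
    rw [Real.norm_eq_abs, abs_pow]
    exact pow_le_pow_left₀ (abs_nonneg _) (hfD x) _
  refine (hf.bdd_mul (hf.aestronglyMeasurable.pow _) hbdd).congr (ae_of_all _ fun x => ?_)
  simp only [Pi.pow_apply]
  rw [← pow_succ, Nat.sub_add_cancel (Nat.one_le_iff_ne_zero.2 hm)]

lemma abs_integral_pow_sub_integral_pow_le {m : ℕ} (hm : 2 ≤ m) {f g : α → ℝ} {D ε : ℝ}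
    (hf : Integrable f μ) (hg : Integrable g μ) (hf0 : ∀ x, 0 ≤ f x) (hg0 : ∀ x, 0 ≤ g x)
    (hfD : ∀ x, f x ≤ D) (hgD : ∀ x, g x ≤ D) (hfg : ∀ x, |f x - g x| ≤ ε) :
    |∫ x, f x ^ m ∂μ - ∫ x, g x ^ m ∂μ| ≤ ε * m * D ^ (m - 2) * (∫ x, f x ∂μ + ∫ x, g x ∂μ) := by
  have hm0 : m ≠ 0 := by omega
  have hfm := hf.pow_of_abs_le (fun x => (abs_of_nonneg (hf0 x)).trans_le (hfD x)) hm0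
  have hgm := hg.pow_of_abs_le (fun x => (abs_of_nonneg (hg0 x)).trans_le (hgD x)) hm0
  have hpoint : ∀ x, |f x ^ m - g x ^ m| ≤ ε * m * D ^ (m - 2) * (f x + g x) := fun x => by
    have hD : 0 ≤ D := (hf0 x).trans (hfD x)
    calc |f x ^ m - g x ^ m| ≤ m * D ^ (m - 2) * (f x + g x) * |f x - g x| :=
          abs_pow_sub_pow_le_of_le hm (hf0 x) (hg0 x) (hfD x) (hgD x)
      _ ≤ m * D ^ (m - 2) * (f x + g x) * ε := by
          have := add_nonneg (hf0 x) (hg0 x)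
          gcongr
          exact hfg x
      _ = ε * m * D ^ (m - 2) * (f x + g x) := by ring
  rw [← integral_sub hfm hgm, ← integral_add hf hg, ← integral_const_mul]
  exact abs_integral_le_integral_abs.trans
    (integral_mono (hfm.sub hgm).abs ((hf.add hg).const_mul _) hpoint)

end Integrals

lemma setIntegral_Ico_comp_floor (F : ℤ → ℝ) (k : ℤ) :
    ∫ y in Set.Ico (k : ℝ) (k + 1), F ⌊y⌋ = F k := by
  rw [setIntegral_congr_fun measurableSet_Ico (g := fun _ => F k) fun y hy => by
    rw [Int.floor_eq_iff.2 hy]]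
  simp

lemma integrable_comp_floor {F : ℤ → ℝ} (hF : Summable F) :
    Integrable (fun y : ℝ => F ⌊y⌋) := by
  have hpiece : ∀ k : ℤ, IntegrableOn (fun y : ℝ => F ⌊y⌋) (Set.Ico (k : ℝ) (k + 1)) :=
    fun k => (integrableOn_const measure_Ico_lt_top.ne (C := F k)).congr_fun
      (fun y hy => by rw [Int.floor_eq_iff.2 hy]) measurableSet_Ico
  have h := integrableOn_iUnion_of_summable_integral_norm hpiece (by
    simpa only [Real.norm_eq_abs, setIntegral_Ico_comp_floor (fun k => |F k|)] using hF.abs)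
  rwa [iUnion_Ico_intCast, integrableOn_univ] at h

lemma integral_comp_floor {F : ℤ → ℝ} (hF : Summable F) :
    ∫ y : ℝ, F ⌊y⌋ = ∑' k, F k := by
  have h := integral_iUnion (fun k : ℤ => measurableSet_Ico) (Set.pairwise_disjoint_Ico_intCast ℝ)
    (integrable_comp_floor hF).integrableOn
  rwa [iUnion_Ico_intCast, setIntegral_univ, tsum_congr (setIntegral_Ico_comp_floor F)] at h

lemma integrable_comp_floor_add_mul {F : ℤ → ℝ} (hF : Summable F) (a : ℝ) {σ : ℝ} (hσ : σ ≠ 0) :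
    Integrable (fun x : ℝ => F ⌊a + x * σ⌋) :=
  ((integrable_comp_floor hF).comp_add_left a).comp_mul_right' hσ

lemma integral_comp_floor_add_mul {F : ℤ → ℝ} (hF : Summable F) (a : ℝ) {σ : ℝ} (hσ : 0 < σ) :
    ∫ x : ℝ, F ⌊a + x * σ⌋ = σ⁻¹ * ∑' k, F k := by
  rw [Measure.integral_comp_mul_right (fun y => F ⌊a + y⌋),
    integral_add_left_eq_self (fun y => F ⌊y⌋), integral_comp_floor hF,
    abs_of_pos (inv_pos.2 hσ), smul_eq_mul]

theorem abs_pow_mul_tsum_pow_sub_integral_pow_le {m : ℕ} (hm : 2 ≤ m) {g : ℝ → ℝ}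
    (hg : Integrable g) (hg0 : ∀ x, 0 ≤ g x) (hg1 : ∫ x, g x = 1) {p : ℤ → ℝ}
    (hp0 : ∀ k, 0 ≤ p k) (hp1 : HasSum p 1) {a σ ε D : ℝ} (hσ : 0 < σ)
    (hgD : ∀ x, g x + ε ≤ D) (hclose : ∀ x, |σ * p ⌊a + x * σ⌋ - g x| ≤ ε) :
    |σ ^ (m - 1) * ∑' k, p k ^ m - ∫ x, g x ^ m| ≤ 2 * ε * m * D ^ (m - 2) := by
  set f : ℝ → ℝ := fun x => σ * p ⌊a + x * σ⌋
  have hpm : Summable fun k => p k ^ m := by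
    refine .of_nonneg_of_le (fun k => pow_nonneg (hp0 k) m) (fun k => ?_) hp1.summable
    exact pow_le_of_le_one (hp0 k) (le_hasSum hp1 k fun j _ => hp0 j) (by omega)
  have hf : Integrable f := (integrable_comp_floor_add_mul hp1.summable a hσ.ne').const_mul σ
  have hf1 : ∫ x, f x = 1 := by
    rw [integral_const_mul, integral_comp_floor_add_mul hp1.summable a hσ, hp1.tsum_eq,
      mul_one, mul_inv_cancel₀ hσ.ne']
  have hfm : ∫ x, f x ^ m = σ ^ (m - 1) * ∑' k, p k ^ m := by
    simp_rw [f, mul_pow]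
    rw [integral_const_mul, integral_comp_floor_add_mul (F := fun k => p k ^ m) hpm a hσ,
      ← mul_assoc, pow_sub₀ _ hσ.ne' (by omega : 1 ≤ m), pow_one]
  have hfD : ∀ x, f x ≤ D := fun x => by linarith [(abs_le.1 (hclose x)).2, hgD x]
  have hε : 0 ≤ ε := (abs_nonneg _).trans (hclose 0)
  have key := abs_integral_pow_sub_integral_pow_le hm hf hg
    (fun x => mul_nonneg hσ.le (hp0 _)) hg0 hfD (fun x => by linarith [hgD x]) hclose
  rw [hf1, hg1, hfm] at key
  linarith

section Probability

variable {Ω β : Type*} [MeasurableSpace Ω] {P : Measure Ω} [Countable β] [MeasurableSpace β]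
  [MeasurableSingletonClass β]

lemma hasSum_measureReal_preimage_singleton [IsProbabilityMeasure P] {X : Ω → β}
    (hX : AEMeasurable X P) : HasSum (fun k => P.real (X ⁻¹' {k})) 1 := by
  have hfibers : ∑' k, P (X ⁻¹' {k}) = 1 := by
    have hdisj : Pairwise (Function.onFun (AEDisjoint P) fun k => X ⁻¹' {k}) :=
      fun k l hkl => (Set.disjoint_iff.2 fun ω h => hkl (h.1.symm.trans h.2)).aedisjoint
    rw [← measure_iUnion₀ hdisj fun k => hX.nullMeasurableSet_preimage (measurableSet_singleton k),
      ← Set.preimage_iUnion, Set.iUnion_of_singleton, Set.preimage_univ, measure_univ]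
  have h := ENNReal.hasSum_toReal (hfibers ▸ ENNReal.one_ne_top)
  rwa [← ENNReal.tsum_toReal_eq (fun k => measure_ne_top _ _), hfibers, ENNReal.toReal_one] at h

lemma measureReal_forall_eq_eq_tsum_pow [IsFiniteMeasure P] {ι : Type*} [Fintype ι] [Nonempty ι]
    {Y : ι → Ω → β} {X : Ω → β} (hid : ∀ i, IdentDistrib (Y i) X P P) (hind : iIndepFun Y P) :
    P.real {ω | ∀ i j, Y i ω = Y j ω} = ∑' k, P.real (X ⁻¹' {k}) ^ Fintype.card ι := by
  obtain ⟨i₀⟩ := ‹Nonempty ι›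
  have hset : {ω | ∀ i j, Y i ω = Y j ω} = ⋃ k, ⋂ i, Y i ⁻¹' {k} := by
    ext ω
    simp only [Set.mem_ofPred_eq, Set.mem_iUnion, Set.mem_iInter, Set.mem_preimage,
      Set.mem_singleton_iff]
    exact ⟨fun h => ⟨Y i₀ ω, fun i => h i i₀⟩, fun ⟨k, hk⟩ i j => (hk i).trans (hk j).symm⟩
  have hdisj : Pairwise (Function.onFun (AEDisjoint P) fun k => ⋂ i, Y i ⁻¹' {k}) :=
    fun k l hkl => (Set.disjoint_iff.2 fun ω h => hkl <| by
      simp only [Set.mem_inter_iff, Set.mem_iInter, Set.mem_preimage,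
        Set.mem_singleton_iff] at h
      exact (h.1 i₀).symm.trans (h.2 i₀)).aedisjoint
  have hmeas : ∀ k, NullMeasurableSet (⋂ i, Y i ⁻¹' {k}) P := fun k =>
    .iInter fun i => (hid i).aemeasurable_fst.nullMeasurableSet_preimage (measurableSet_singleton k)
  have hterm : ∀ k, P (⋂ i, Y i ⁻¹' {k}) = P (X ⁻¹' {k}) ^ Fintype.card ι := fun k => by
    have h := hind.measure_inter_preimage_eq_mul Finset.univ (sets := fun _ => {k})
      (fun i _ => measurableSet_singleton k)
    simp only [Finset.mem_univ, Set.iInter_true] at h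
    rw [h, Finset.prod_congr rfl fun i _ => (hid i).measure_mem_eq (measurableSet_singleton k),
      Finset.prod_const, Finset.card_univ]
  rw [measureReal_def, hset, measure_iUnion₀ hdisj hmeas, tsum_congr hterm,
    ENNReal.tsum_toReal_eq fun k => ENNReal.pow_ne_top (measure_ne_top _ _)]
  simp only [measureReal_def, ENNReal.toReal_pow]

end Probability

lemma tendsto_of_forall_eventually_abs_sub_le {α : Type*} {l : Filter α} {u : α → ℝ} {L K : ℝ}
    (h : ∀ ε > 0, ε ≤ 1 → ∀ᶠ n in l, |u n - L| ≤ ε * K) : Tendsto u l (𝓝 L) := by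
  rw [Metric.tendsto_nhds]
  intro δ hδ
  have hK : 0 < |K| + 1 := by positivity
  set ε := min 1 (δ / (|K| + 1))
  have hε : 0 < ε := lt_min one_pos (div_pos hδ hK)
  filter_upwards [h ε hε (min_le_left _ _)] with n hn
  calc dist (u n) L ≤ ε * |K| := by
        rw [Real.dist_eq]; exact hn.trans (by gcongr; exact le_abs_self K)
    _ ≤ δ / (|K| + 1) * |K| := by gcongr; exact min_le_right _ _
    _ < δ := by
        rw [div_mul_eq_mul_div, div_lt_iff₀ hK]
        nlinarith [abs_nonneg K]

open MeasureTheory ProbabilityTheory in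
theorem stmt_13_general {Ω : Type*} [MeasureSpace Ω] [IsProbabilityMeasure (ℙ : Measure Ω)]
    (m : ℕ) (hm : 2 ≤ m)
    (X : ℕ → Ω → ℤ) (Y : Fin m → ℕ → Ω → ℤ) (μn σn : ℕ → ℝ) (g : ℝ → ℝ)
    (hg_nonneg : ∀ x, 0 ≤ g x)
    (hg_int : (∫ x, g x) = 1)
    (hid : ∀ i n, IdentDistrib (Y i n) (X n))
    (hindep : ∀ n, iIndepFun (fun i => Y i n))
    (hσ : Filter.Tendsto σn Filter.atTop Filter.atTop)
    (hLLT : ∀ ε > 0, ∀ᶠ n in Filter.atTop, ∀ x : ℝ,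
      |σn n * (ℙ {ω | X n ω = ⌊μn n + x * σn n⌋}).toReal - g x| ≤ ε) :
    Filter.Tendsto
      (fun n => σn n ^ (m - 1) *
        (ℙ {ω | ∀ i j : Fin m, Y i n ω = Y j n ω}).toReal)
      Filter.atTop (nhds (∫ x, g x ^ m)) := by
  have i₀ : Fin m := ⟨0, by omega⟩
  have : Nonempty (Fin m) := ⟨i₀⟩
  have hg : Integrable g := by
    by_contra h
    rw [integral_undef h] at hg_int
    exact zero_ne_one hg_int
  obtain ⟨C, hgC⟩ : ∃ C, ∀ x, g x ≤ C := by
    obtain ⟨n, hn, hσn⟩ := ((hLLT 1 one_pos).and (hσ.eventually_ge_atTop 0)).exists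
    refine ⟨σn n + 1, fun x => ?_⟩
    have hp : (ℙ {ω | X n ω = ⌊μn n + x * σn n⌋}).toReal ≤ 1 := measureReal_le_one
    nlinarith [(abs_le.1 (hn x)).1]
  refine tendsto_of_forall_eventually_abs_sub_le (K := 2 * m * (C + 1) ^ (m - 2))
    fun ε hε hε1 => ?_
  filter_upwards [hLLT ε hε, hσ.eventually_gt_atTop 0] with n hn hσn
  have hdiag := measureReal_forall_eq_eq_tsum_pow (fun i => hid i n) (hindep n)
  rw [Fintype.card_fin] at hdiag
  rw [← measureReal_def, hdiag]
  have key := abs_pow_mul_tsum_pow_sub_integral_pow_le hm hg hg_nonneg hg_int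
    (fun _ => measureReal_nonneg)
    (hasSum_measureReal_preimage_singleton (hid i₀ n).aemeasurable_snd)
    hσn (D := C + 1) (fun x => by linarith [hgC x]) hn
  linarith

open MeasureTheory ProbabilityTheory in
theorem stmt_13 {Ω : Type*} [MeasureSpace Ω] [IsProbabilityMeasure (ℙ : Measure Ω)]
    (m : ℕ) (hm : 2 ≤ m)
    (X : ℕ → Ω → ℤ) (Y : Fin m → ℕ → Ω → ℤ) (μn σn : ℕ → ℝ) (g : ℝ → ℝ)
    (hg_cont : Continuous g) (hg_nonneg : ∀ x, 0 ≤ g x)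
    (hg_int : (∫ x, g x) = 1)
    (hmeas : ∀ i n, Measurable (Y i n))
    (hid : ∀ i n, IdentDistrib (Y i n) (X n))
    (hindep : ∀ n, iIndepFun (fun i => Y i n))
    (hmean : ∀ n, (∫ ω, ((X n ω : ℝ))) = μn n)
    (hvar : ∀ n, variance (fun ω => (X n ω : ℝ)) ℙ = σn n ^ 2)
    (hσ : Filter.Tendsto σn Filter.atTop Filter.atTop)
    (hLLT : ∀ ε > 0, ∀ᶠ n in Filter.atTop, ∀ x : ℝ,
      |σn n * (ℙ {ω | X n ω = ⌊μn n + x * σn n⌋}).toReal - g x| ≤ ε) :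
    Filter.Tendsto
      (fun n => σn n ^ (m - 1) *
        (ℙ {ω | ∀ i j : Fin m, Y i n ω = Y j n ω}).toReal)
      Filter.atTop (nhds (∫ x, g x ^ m)) :=
  stmt_13_general m hm X Y μn σn g hg_nonneg hg_int hid hindep hσ hLLT
end

section
/- If the allowed parts are two integers a ≠ b (with multiplicities α_i for a and β_i for b in the i-th composition), then the number of m-tuples of compositions of n all having the same number of parts is D_n(m) = sum over pairs (n_1, n_2) of nonnegative integers with n_1·a + n_2·b = n of binomial(n_1+n_2, n_1)^m · (α_1···α_m)^{n_1} · (β_1···β_m)^{n_2}. -/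
/-!
A weighted composition with integer weights is modelled as a list of pairs (part, colour), a part
`a` carrying one of `α i` colours and a part `b` one of `β i`; such lists are the injective images
of words over `Fin (α i) ⊕ Fin (β i)`. As `a ≠ b`, compositions of `n` with equally many parts
have the same numbers `(n₁, n₂)` of parts `a` and `b`, so the tuples split over the solutions of
`n₁ a + n₂ b = n` into products of sets of words with `n₁` left and `n₂` right letters, which have
`C(n₁ + n₂, n₁) α_i ^ n₁ β_i ^ n₂` elements.
-/

open Finset

section FunToSum

variable {X A B : Type*} [Fintype A] [Fintype B]

theorem card_filter_isLeft_eq (b : Bool) :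
    #{y : A ⊕ B | y.isLeft = b} = if b then Fintype.card A else Fintype.card B := by
  cases b
  · simpa [← Fintype.card_subtype] using Fintype.card_congr (Equiv.sumIsRight (α := A) (β := B))
  · simpa [← Fintype.card_subtype] using Fintype.card_congr (Equiv.sumIsLeft (α := A) (β := B))

variable [Fintype X] [DecidableEq X]

theorem card_fun_filter_isLeft_eq (s : Finset X) :
    #{f : X → A ⊕ B | ({x | (f x).isLeft} : Finset X) = s} =
      Fintype.card A ^ #s * Fintype.card B ^ (Fintype.card X - #s) := by
  have hfib : ({f : X → A ⊕ B | ({x | (f x).isLeft} : Finset X) = s} : Finset (X → A ⊕ B)) =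
      Fintype.piFinset fun x => {y | y.isLeft = decide (x ∈ s)} := by
    ext f
    simp only [Finset.ext_iff, mem_filter, mem_univ, true_and, Fintype.mem_piFinset]
    exact forall_congr' fun x => by cases (f x).isLeft <;> simp
  rw [hfib, Fintype.card_piFinset]
  simp only [card_filter_isLeft_eq, decide_eq_true_eq]
  rw [prod_ite, prod_const, prod_const]
  simp [filter_not, card_sdiff]

theorem card_fun_card_filter_isLeft_eq (k : ℕ) :
    #{f : X → A ⊕ B | #{x | (f x).isLeft} = k} =
      (Fintype.card X).choose k * Fintype.card A ^ k * Fintype.card B ^ (Fintype.card X - k) := by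
  rw [card_eq_sum_card_fiberwise (f := fun f : X → A ⊕ B => ({x | (f x).isLeft} : Finset X))
      (t := powersetCard k univ) (fun f hf => by simpa [mem_powersetCard] using hf),
    ← card_univ (α := X), ← card_powersetCard, mul_assoc, ← smul_eq_mul, ← sum_const]
  refine sum_congr rfl fun s hs => ?_
  rw [mem_powersetCard] at hs
  rw [filter_filter, ← hs.2, card_univ, ← card_fun_filter_isLeft_eq]
  congr 1
  refine filter_congr fun f _ => and_iff_right_of_imp ?_
  rintro rfl
  rfl

end FunToSum

theorem List.countP_ofFn {n : ℕ} {T : Type*} (f : Fin n → T) (p : T → Bool) :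
    (List.ofFn f).countP p = #{i | p (f i)} := by
  have h := Multiset.coe_countP (fun x => p x = true) (List.ofFn f)
  simp only [Bool.decide_eq_true] at h
  rw [← h, ← Fin.univ_val_map]
  exact Multiset.countP_map f univ.val (fun x => p x = true)

theorem List.countP_isLeft_add_countP_isRight {A B : Type*} (w : List (A ⊕ B)) :
    w.countP Sum.isLeft + w.countP Sum.isRight = w.length := by
  rw [List.length_eq_countP_add_countP Sum.isLeft]
  congr 1
  exact List.countP_congr fun x _ => by cases x <;> simp

def wordsWithCounts (A B : Type*) (k l : ℕ) : Set (List (A ⊕ B)) :=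
  {w | w.countP Sum.isLeft = k ∧ w.countP Sum.isRight = l}

section wordsWithCounts

variable {A B : Type*} {k l : ℕ}

theorem length_of_mem_wordsWithCounts {w : List (A ⊕ B)} (hw : w ∈ wordsWithCounts A B k l) :
    w.length = k + l := by
  rw [← w.countP_isLeft_add_countP_isRight, hw.1, hw.2]

theorem ofFn_mem_wordsWithCounts {f : Fin (k + l) → A ⊕ B} (hf : #{i | (f i).isLeft} = k) :
    List.ofFn f ∈ wordsWithCounts A B k l := by
  have hk : (List.ofFn f).countP Sum.isLeft = k := by rw [List.countP_ofFn, hf]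
  refine ⟨hk, ?_⟩
  have := (List.ofFn f).countP_isLeft_add_countP_isRight
  rw [List.length_ofFn] at this
  omega

theorem bijective_ofFn_wordsWithCounts :
    Function.Bijective fun f : {f : Fin (k + l) → A ⊕ B // #{i | (f i).isLeft} = k} =>
      (⟨List.ofFn f.1, ofFn_mem_wordsWithCounts f.2⟩ : wordsWithCounts A B k l) := by
  refine ⟨fun f g h => Subtype.ext (List.ofFn_injective (congrArg Subtype.val h)), ?_⟩
  rintro ⟨w, hw⟩
  have hlen := length_of_mem_wordsWithCounts hw
  have hofFn : List.ofFn (fun i : Fin (k + l) => w[i.1]'(by omega)) = w :=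
    List.ext_getElem (by simp [hlen]) (by simp)
  refine ⟨⟨_, ?_⟩, Subtype.ext hofFn⟩
  rw [← List.countP_ofFn, hofFn]
  exact hw.1

instance (A B : Type*) [Finite A] [Finite B] (k l : ℕ) : Finite (wordsWithCounts A B k l) := by
  have := Fintype.ofFinite A
  have := Fintype.ofFinite B
  exact Finite.of_surjective _ bijective_ofFn_wordsWithCounts.2

theorem card_wordsWithCounts [Fintype A] [Fintype B] (k l : ℕ) :
    Nat.card (wordsWithCounts A B k l) =
      (k + l).choose k * Fintype.card A ^ k * Fintype.card B ^ l := by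
  rw [← Nat.card_eq_of_bijective _ bijective_ofFn_wordsWithCounts, Nat.card_eq_fintype_card,
    Fintype.card_subtype, card_fun_card_filter_isLeft_eq, Fintype.card_fin, Nat.add_sub_cancel_left]

end wordsWithCounts

def coloredPart (a b : ℕ) {p r : ℕ} : Fin p ⊕ Fin r → ℕ × ℕ :=
  Sum.elim (fun c => (a, c)) (fun c => (b, c))

def weightedCompositions (a b p r n : ℕ) : Set (List (ℕ × ℕ)) :=
  {l | (l.map Prod.fst).sum = n ∧ ∀ x ∈ l, (x.1 = a ∧ x.2 < p) ∨ (x.1 = b ∧ x.2 < r)}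

section coloredPart

variable {a b p r : ℕ}

theorem coloredPart_injective (hab : a ≠ b) :
    Function.Injective (coloredPart a b (p := p) (r := r)) := by
  rintro (c | c) (d | d) h <;> simp_all [coloredPart, Prod.ext_iff, Fin.ext_iff]

theorem range_coloredPart :
    Set.range (coloredPart a b (p := p) (r := r)) =
      {x | (x.1 = a ∧ x.2 < p) ∨ (x.1 = b ∧ x.2 < r)} := by
  ext ⟨c, d⟩
  simp only [Set.mem_range, Sum.exists, coloredPart, Sum.elim_inl, Sum.elim_inr, Prod.mk.injEq,
    Fin.exists_iff, Set.mem_ofPred_eq]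
  grind

theorem sum_map_fst_map_coloredPart (w : List (Fin p ⊕ Fin r)) :
    ((w.map (coloredPart a b)).map Prod.fst).sum =
      w.countP Sum.isLeft * a + w.countP Sum.isRight * b := by
  induction w with
  | nil => simp
  | cons x w ih =>
    rw [List.map_cons, List.map_cons, List.sum_cons, ih]
    cases x <;> simp [coloredPart, List.countP_cons] <;> ring

theorem map_coloredPart_mem_weightedCompositions (w : List (Fin p ⊕ Fin r)) :
    w.map (coloredPart a b) ∈
      weightedCompositions a b p r (w.countP Sum.isLeft * a + w.countP Sum.isRight * b) := by
  refine ⟨sum_map_fst_map_coloredPart w, fun x hx => ?_⟩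
  obtain ⟨y, -, rfl⟩ := List.mem_map.1 hx
  exact range_coloredPart.subset ⟨y, rfl⟩

theorem exists_map_coloredPart_eq {n : ℕ} {l : List (ℕ × ℕ)}
    (hl : l ∈ weightedCompositions a b p r n) :
    ∃ w : List (Fin p ⊕ Fin r), w.map (coloredPart a b) = l ∧
      w.countP Sum.isLeft * a + w.countP Sum.isRight * b = n := by
  have : l ∈ Set.range (List.map (coloredPart a b (p := p) (r := r))) := by
    rw [Set.range_list_map, range_coloredPart]
    exact hl.2
  obtain ⟨w, rfl⟩ := this
  exact ⟨w, rfl, (sum_map_fst_map_coloredPart w).symm.trans hl.1⟩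

end coloredPart

theorem eq_and_eq_of_mul_add_mul_eq {a b k l k' l' : ℕ} (hab : a ≠ b)
    (hsum : k * a + l * b = k' * a + l' * b) (hlen : k + l = k' + l') : k = k' ∧ l = l' := by
  zify at hsum hlen
  have : ((k : ℤ) - k') * ((a : ℤ) - b) = 0 := by linear_combination hsum - b * hlen
  rcases mul_eq_zero.1 this with h | h <;> omega

def partCounts (a b n : ℕ) : Finset (ℕ × ℕ) :=
  {q ∈ range (n + 1) ×ˢ range (n + 1) | q.1 * a + q.2 * b = n}

theorem mem_partCounts {a b n : ℕ} (ha : 0 < a) (hb : 0 < b) {q : ℕ × ℕ} :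
    q ∈ partCounts a b n ↔ q.1 * a + q.2 * b = n := by
  simp only [partCounts, mem_filter, mem_product, mem_range, and_iff_right_iff_imp]
  intro h
  have := Nat.le_mul_of_pos_right q.1 ha
  have := Nat.le_mul_of_pos_right q.2 hb
  omega

def equalLengthTuples (a b n : ℕ) {m : ℕ} (α β : Fin m → ℕ) : Set (Fin m → List (ℕ × ℕ)) :=
  {f | (∀ i, f i ∈ weightedCompositions a b (α i) (β i) n) ∧ ∀ i j, (f i).length = (f j).length}

section tupleOfWords

variable {a b n m : ℕ} {α β : Fin m → ℕ}

def tupleOfWords (a b n : ℕ) (α β : Fin m → ℕ) :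
    (Σ q : partCounts a b n, ∀ i, wordsWithCounts (Fin (α i)) (Fin (β i)) q.1.1 q.1.2) →
      equalLengthTuples a b n α β := fun x =>
  ⟨fun i => (x.2 i).1.map (coloredPart a b), fun i => by
      have h := map_coloredPart_mem_weightedCompositions (a := a) (b := b) (x.2 i).1
      rwa [(x.2 i).2.1, (x.2 i).2.2, (mem_filter.1 x.1.2).2] at h,
    fun i j => by
      rw [List.length_map, List.length_map, length_of_mem_wordsWithCounts (x.2 i).2,
        length_of_mem_wordsWithCounts (x.2 j).2]⟩

theorem tupleOfWords_injective (hab : a ≠ b) (i₀ : Fin m) :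
    Function.Injective (tupleOfWords a b n α β) := by
  rintro ⟨q, w⟩ ⟨q', w'⟩ h
  have hw : ∀ i, (w i).1 = (w' i).1 := fun i =>
    (coloredPart_injective hab).list_map (congrFun (congrArg Subtype.val h) i)
  obtain rfl : q = q' := Subtype.ext <| Prod.ext
    ((w i₀).2.1.symm.trans ((hw i₀) ▸ (w' i₀).2.1))
    ((w i₀).2.2.symm.trans ((hw i₀) ▸ (w' i₀).2.2))
  obtain rfl : w = w' := funext fun i => Subtype.ext (hw i)
  rfl

theorem tupleOfWords_surjective (ha : 0 < a) (hb : 0 < b) (hab : a ≠ b) (i₀ : Fin m) :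
    Function.Surjective (tupleOfWords a b n α β) := by
  rintro ⟨f, hf, hlen⟩
  choose w hw hsum using fun i => exists_map_coloredPart_eq (hf i)
  have hlenw : ∀ i, (w i).length = (w i₀).length := fun i => by
    simpa [← hw] using hlen i i₀
  set q := ((w i₀).countP Sum.isLeft, (w i₀).countP Sum.isRight)
  have hcounts : ∀ i, w i ∈ wordsWithCounts (Fin (α i)) (Fin (β i)) q.1 q.2 := fun i =>
    eq_and_eq_of_mul_add_mul_eq hab ((hsum i).trans (hsum i₀).symm) (by
      rw [List.countP_isLeft_add_countP_isRight, List.countP_isLeft_add_countP_isRight, hlenw])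
  exact ⟨⟨⟨q, (mem_partCounts ha hb).2 (hsum i₀)⟩, fun i => ⟨w i, hcounts i⟩⟩,
    Subtype.ext (funext hw)⟩

end tupleOfWords

theorem stmt_17 (a b : ℕ) (ha : 0 < a) (hb : 0 < b) (hab : a ≠ b)
    (m : ℕ) (hm : 1 ≤ m) (α β : Fin m → ℕ) (n : ℕ) :
    Nat.card {f : Fin m → List (ℕ × ℕ) //
      (∀ i, ((f i).map Prod.fst).sum = n ∧
        ∀ x ∈ f i, (x.1 = a ∧ x.2 < α i) ∨ (x.1 = b ∧ x.2 < β i)) ∧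
      (∀ i j, (f i).length = (f j).length)} =
    ∑ q ∈ Finset.range (n + 1) ×ˢ Finset.range (n + 1),
      if q.1 * a + q.2 * b = n then
        Nat.choose (q.1 + q.2) q.1 ^ m * (∏ i, α i) ^ q.1 * (∏ i, β i) ^ q.2
      else 0 := by
  let i₀ : Fin m := ⟨0, hm⟩
  change Nat.card (equalLengthTuples a b n α β) = _
  rw [← Nat.card_eq_of_bijective _
      ⟨tupleOfWords_injective hab i₀, tupleOfWords_surjective ha hb hab i₀⟩,
    Nat.card_sigma, ← sum_filter]
  refine (Fintype.sum_congr _ _ fun q => ?_).trans (sum_coe_sort (partCounts a b n) _)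
  simp only [Nat.card_pi, card_wordsWithCounts, Fintype.card_fin, prod_mul_distrib, prod_const,
    card_univ, prod_pow]
end

section
/- For formal power series over a commutative ring, with p_1(z) = α z + β z² and p_2(z) = w/(1−w) substituted appropriately, the diagonal generating function of pairs of compositions (first with parts weighted by p_1, second unrestricted) is D(z) = 1/2 + (1/2)·(1 + αz)/√(1 − 2αz + z²(α² − 4β)); in particular for α = β = 1, D(z) = 1/2 + (1/2)·√((1+z)/(1−3z)), i.e. (2D(z) − 1)² (1 − 3z) = 1 + z. -/
/-- Weighted generating function of pairs (composition of `n` with parts in {1,2},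
part 1 weighted by `α` and part 2 by `β`; unrestricted composition of `n`) having the
same number of parts. -/
noncomputable def Dgen (R : Type*) [CommRing R] (α β : R) : PowerSeries R :=
  PowerSeries.mk fun n => ∑ k ∈ Finset.range (n + 1),
    (Nat.choose k (n - k) : R) * α ^ (2 * k - n) * β ^ (n - k) *
      (Nat.choose (n - 1) (k - 1) : R)

/-!
Put `Q = 1 - 2αz + (α² - 4β)z² = (1 - αz)² - 4βz²`. The central binomial series
`c(u) = ∑ C(2m,m) uᵐ` satisfies `c² (1 - 4u) = 1`, which follows from the first-order ODE
`(1 - 4u) c' = 2c`. Substituting `u = βz²/(1 - αz)²` shows that `T = c(u)/(1 - αz)`, whose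
coefficients are `∑ₘ C(2m,m) C(n,2m) α^(n-2m) βᵐ`, satisfies `T² Q = 1`. Indexing the pairs
counted by `D` by the number `m` of parts equal to `2`, the identity
`2 C(n+1-m, m) C(n, m) = C(2m,m) (C(n+1, 2m) + C(n, 2m))` gives `2D - 1 = (1 + αz) T`.
-/

open Nat in
lemma two_mul_choose_mul_choose (n m : ℕ) :
    2 * ((n + 1 - m).choose m * n.choose m) =
      m.centralBinom * ((n + 1).choose (2 * m) + n.choose (2 * m)) := by
  rw [centralBinom_eq_two_mul_choose]
  rcases lt_trichotomy (2 * m) (n + 1) with h | h | h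
  · obtain ⟨s, rfl⟩ : ∃ s, n = 2 * m + s := ⟨n - 2 * m, by omega⟩
    have e₁ : ((2 * m + s + 1 - m).choose m : ℚ) = (m + s + 1)! / (m ! * (s + 1)!) := by
      rw [show 2 * m + s + 1 - m = m + (s + 1) by omega, cast_add_choose]; rfl
    have e₂ : ((2 * m + s).choose m : ℚ) = (2 * m + s)! / (m ! * (m + s)!) := by
      rw [show 2 * m + s = m + (m + s) by omega, cast_add_choose]
    have e₃ : ((2 * m).choose m : ℚ) = (2 * m)! / (m ! * m !) := by
      rw [two_mul, cast_add_choose]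
    have e₄ : ((2 * m + s + 1).choose (2 * m) : ℚ) =
        (2 * m + s + 1)! / ((2 * m)! * (s + 1)!) := by
      rw [show 2 * m + s + 1 = 2 * m + (s + 1) by omega, cast_add_choose]
    have e₅ : ((2 * m + s).choose (2 * m) : ℚ) = (2 * m + s)! / ((2 * m)! * s !) :=
      cast_add_choose ℚ
    apply Nat.cast_injective (R := ℚ)
    push_cast
    rw [e₁, e₂, e₃, e₄, e₅, factorial_succ (m + s), factorial_succ s,
      factorial_succ (2 * m + s)]
    push_cast
    field_simp
    ring
  · obtain ⟨j, rfl⟩ : ∃ j, m = j + 1 := ⟨m - 1, by omega⟩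
    obtain rfl : n = 2 * j + 1 := by omega
    have hc : (2 * (j + 1)).choose (j + 1) = 2 * (2 * j + 1).choose (j + 1) := by
      rw [show 2 * (j + 1) = 2 * j + 1 + 1 by omega, choose_succ_succ, choose_symm_half]
      ring
    rw [show 2 * j + 1 + 1 - (j + 1) = j + 1 by omega, choose_self, ← h, choose_self,
      choose_eq_zero_of_lt (by omega : 2 * j + 1 < 2 * (j + 1)), hc]
    ring
  · rw [choose_eq_zero_of_lt (by omega : n + 1 - m < m), choose_eq_zero_of_lt h,
      choose_eq_zero_of_lt (by omega : n < 2 * m)]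
    simp

section

open PowerSeries

noncomputable def centralBinomSeries (R : Type*) [CommRing R] : R⟦X⟧ :=
  mk fun n => (n.centralBinom : R)

variable {R : Type*} [CommRing R]

@[simp]
lemma map_centralBinomSeries {S : Type*} [CommRing S] (f : R →+* S) :
    map f (centralBinomSeries R) = centralBinomSeries S := by
  ext n
  simp [centralBinomSeries]

lemma one_sub_four_X_mul_derivative_centralBinomSeries :
    (1 - 4 * X) * d⁄dX R (centralBinomSeries R) = 2 * centralBinomSeries R := by
  rw [show (4 : R⟦X⟧) = C 4 from (map_ofNat C 4).symm,
    show (2 : R⟦X⟧) = C 2 from (map_ofNat C 2).symm]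
  ext n
  have h := congrArg (Nat.cast : ℕ → R) (Nat.succ_mul_centralBinom_succ n)
  push_cast at h
  rcases n with _ | n
  · simp [centralBinomSeries, sub_mul, mul_assoc, coeff_derivative, coeff_zero_X_mul,
      -coeff_zero_eq_constantCoeff,
      Nat.centralBinom, Nat.choose]
  · simp only [centralBinomSeries, sub_mul, one_mul, mul_assoc, map_sub, coeff_derivative,
      coeff_mk, coeff_C_mul, coeff_succ_X_mul]
    push_cast at h ⊢
    linear_combination h

lemma centralBinomSeries_sq_mul_one_sub_four_X :
    centralBinomSeries R ^ 2 * (1 - 4 * X) = 1 := by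
  -- `derivative.ext` needs a torsion-free ring, so argue over `ℤ` and map.
  have hℤ : centralBinomSeries ℤ ^ 2 * (1 - 4 * X) = 1 := by
    refine derivative.ext ?_ (by simp [centralBinomSeries])
    have h4 : d⁄dX ℤ (4 : ℤ⟦X⟧) = 0 := by
      simpa using Derivation.map_natCast (d⁄dX ℤ) 4
    have h := one_sub_four_X_mul_derivative_centralBinomSeries (R := ℤ)
    simp only [Derivation.leibniz, derivative_pow, map_sub, Derivation.map_one_eq_zero, h4,
      derivative_X, smul_eq_mul]
    linear_combination (2 * centralBinomSeries ℤ) * h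
  simpa [map_ofNat] using congrArg (map (Int.castRingHom R)) hℤ

/-- `β X² / (1 - α X)²` -/
noncomputable def trinomialSubst (R : Type*) [CommRing R] (α β : R) : R⟦X⟧ :=
  C β * X ^ 2 * rescale α (invOneSubPow R 2 : R⟦X⟧)

lemma hasSubst_trinomialSubst (α β : R) : HasSubst (trinomialSubst R α β) :=
  HasSubst.of_constantCoeff_zero' (by simp [trinomialSubst])

lemma one_sub_C_mul_X_sq_mul_one_sub_four_mul_trinomialSubst (α β : R) :
    (1 - C α * X) ^ 2 * (1 - 4 * trinomialSubst R α β) =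
      1 - 2 * C α * X + C (α ^ 2 - 4 * β) * X ^ 2 := by
  have h : (1 - C α * X) ^ 2 * rescale α (invOneSubPow R 2 : R⟦X⟧) = 1 := by
    rw [← rescale_X, ← map_one (rescale α), ← map_sub, ← map_pow, ← map_mul,
      ← invOneSubPow_inv_eq_one_sub_pow, (invOneSubPow R 2).inv_val]
  rw [trinomialSubst]
  simp only [map_sub, map_mul, map_pow, map_ofNat]
  linear_combination (-4 * C β * X ^ 2) * h

lemma coeff_trinomialSubst_pow_succ (α β : R) (d n : ℕ) :
    coeff n (trinomialSubst R α β ^ (d + 1)) =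
      β ^ (d + 1) * α ^ (n - 2 * (d + 1)) * ((n - 1).choose (2 * d + 1) : R) := by
  have hpow : (invOneSubPow R 2) ^ (d + 1) = invOneSubPow R (2 * d + 1 + 1) := by
    rw [invOneSubPow_eq_inv_one_sub_pow, invOneSubPow_eq_inv_one_sub_pow, ← pow_mul]
    ring_nf
  rw [trinomialSubst, mul_pow, mul_pow, ← pow_mul, ← map_pow, ← map_pow,
    ← Units.val_pow_eq_pow_val, hpow, invOneSubPow_val_succ_eq_mk_add_choose, mul_assoc,
    coeff_C_mul, coeff_X_pow_mul', coeff_rescale, coeff_mk]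
  split_ifs with h
  · rw [show 2 * d + 1 + (n - 2 * (d + 1)) = n - 1 by omega]
    ring
  · rw [Nat.choose_eq_zero_of_lt (by omega)]
    simp

lemma coeff_succ_centralBinomSeries_subst (α β : R) (n : ℕ) :
    coeff (n + 1) ((centralBinomSeries R).subst (trinomialSubst R α β)) =
      ∑ d ∈ Finset.range (n + 1), ((d + 1).centralBinom : R) *
        (β ^ (d + 1) * α ^ (n + 1 - 2 * (d + 1)) * (n.choose (2 * d + 1) : R)) := by
  rw [coeff_subst' (hasSubst_trinomialSubst α β),
    finsum_eq_sum_of_support_subset (s := Finset.range (n + 2)), Finset.sum_range_succ']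
  · simp [centralBinomSeries, coeff_trinomialSubst_pow_succ]
  · intro d hd
    by_contra hdn
    simp only [Finset.coe_range, Set.mem_Iio, not_lt] at hdn
    obtain ⟨d, rfl⟩ : ∃ d', d = d' + 1 := ⟨d - 1, by omega⟩
    simp [coeff_trinomialSubst_pow_succ, Nat.choose_eq_zero_of_lt (by omega : n < 2 * d + 1)] at hd

noncomputable def centralTrinomialSeries (R : Type*) [CommRing R] (α β : R) : R⟦X⟧ :=
  mk fun n => ∑ m ∈ Finset.range (n + 1),
    (m.centralBinom * n.choose (2 * m) : R) * α ^ (n - 2 * m) * β ^ m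

lemma coeff_centralTrinomialSeries (α β : R) {n K : ℕ} (h : n < K) :
    coeff n (centralTrinomialSeries R α β) = ∑ m ∈ Finset.range K,
      (m.centralBinom * n.choose (2 * m) : R) * α ^ (n - 2 * m) * β ^ m := by
  rw [centralTrinomialSeries, coeff_mk]
  refine Finset.sum_subset (Finset.range_subset_range.2 h) fun m _ hm => ?_
  simp only [Finset.mem_range, not_lt] at hm
  simp [Nat.choose_eq_zero_of_lt (by omega : n < 2 * m)]

lemma centralTrinomialSeries_mul_one_sub_C_mul_X (α β : R) :
    centralTrinomialSeries R α β * (1 - C α * X) =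
      (centralBinomSeries R).subst (trinomialSubst R α β) := by
  ext n
  rcases n with _ | n
  · have h0 : constantCoeff (trinomialSubst R α β) = 0 := by simp [trinomialSubst]
    rw [coeff_subst' (hasSubst_trinomialSubst α β),
      finsum_eq_single _ 0 fun d hd => by simp [h0, hd]]
    simp [centralTrinomialSeries, centralBinomSeries]
  rw [mul_sub, mul_one, mul_comm, mul_assoc, map_sub, coeff_C_mul, coeff_succ_X_mul,
    coeff_succ_centralBinomSeries_subst,
    coeff_centralTrinomialSeries α β (by omega : n + 1 < n + 2),
    coeff_centralTrinomialSeries α β (by omega : n < n + 2), Finset.mul_sum,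
    ← Finset.sum_sub_distrib, Finset.sum_range_succ']
  simp only [Nat.centralBinom_zero, mul_zero, Nat.choose_zero_right, Nat.sub_zero, pow_zero]
  refine (add_eq_left.2 (by ring)).trans (Finset.sum_congr rfl fun k _ => ?_)
  rw [show 2 * (k + 1) = 2 * k + 1 + 1 by ring, Nat.choose_succ_succ]
  rcases le_or_gt (2 * k + 2) n with h | h
  · rw [show n + 1 - (2 * k + 1 + 1) = n - (2 * k + 1 + 1) + 1 by omega]
    push_cast
    ring
  · rw [Nat.choose_eq_zero_of_lt h]
    push_cast
    ring

lemma centralTrinomialSeries_sq_mul (α β : R) :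
    centralTrinomialSeries R α β ^ 2 * (1 - 2 * C α * X + C (α ^ 2 - 4 * β) * X ^ 2) = 1 := by
  rw [← one_sub_C_mul_X_sq_mul_one_sub_four_mul_trinomialSubst, ← mul_assoc, ← mul_pow,
    centralTrinomialSeries_mul_one_sub_C_mul_X]
  have h := congrArg (substAlgHom (hasSubst_trinomialSubst α β))
    (centralBinomSeries_sq_mul_one_sub_four_X (R := R))
  rwa [map_mul, map_pow, map_sub, map_one, map_mul, map_ofNat, substAlgHom_X,
    coe_substAlgHom] at h

lemma two_mul_Dgen_sub_one (α β : R) :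
    2 * Dgen R α β - 1 = (1 + C α * X) * centralTrinomialSeries R α β := by
  rw [show (2 : R⟦X⟧) = C 2 from (map_ofNat C 2).symm]
  ext n
  rcases n with _ | n
  · norm_num [Dgen, centralTrinomialSeries, add_mul, mul_assoc, coeff_zero_X_mul,
      -coeff_zero_eq_constantCoeff]
  rw [add_mul, one_mul, mul_assoc, map_sub, coeff_C_mul, map_add, coeff_C_mul, coeff_succ_X_mul,
    coeff_one, if_neg n.succ_ne_zero, sub_zero, Dgen, coeff_mk, ← Finset.sum_range_reflect,
    coeff_centralTrinomialSeries α β (by omega : n + 1 < n + 2),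
    coeff_centralTrinomialSeries α β (by omega : n < n + 2), Finset.mul_sum, Finset.mul_sum,
    ← Finset.sum_add_distrib]
  -- after reflecting, `m` is the number of parts equal to `2`
  refine Finset.sum_congr rfl fun m hm => ?_
  have hmn : m ≤ n + 1 := Finset.mem_range_succ_iff.1 hm
  rw [show n + 1 + 1 - 1 - m = n + 1 - m by omega, show n + 1 - (n + 1 - m) = m by omega,
    show 2 * (n + 1 - m) - (n + 1) = n + 1 - 2 * m by omega, Nat.add_sub_cancel,
    show n + 1 - m - 1 = n - m by omega]
  have key := congrArg (Nat.cast : ℕ → R) (two_mul_choose_mul_choose n m)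
  push_cast at key
  rcases hmn.lt_or_eq with hmn | rfl
  · rw [Nat.choose_symm (by omega)]
    rcases le_or_gt (2 * m) n with h | h
    · rw [show n + 1 - 2 * m = n - 2 * m + 1 by omega]
      linear_combination (α ^ (n - 2 * m + 1) * β ^ m) * key
    · rw [Nat.choose_eq_zero_of_lt h] at key ⊢
      push_cast at key ⊢
      linear_combination (α ^ (n + 1 - 2 * m) * β ^ m) * key
  · simp [Nat.choose_eq_zero_of_lt (by omega : n + 1 < 2 * (n + 1)),
      Nat.choose_eq_zero_of_lt (by omega : n < 2 * (n + 1))]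

lemma two_mul_Dgen_sub_one_sq_mul (α β : R) :
    (2 * Dgen R α β - 1) ^ 2 * (1 - 2 * C α * X + C (α ^ 2 - 4 * β) * X ^ 2) =
      (1 + C α * X) ^ 2 := by
  rw [two_mul_Dgen_sub_one]
  linear_combination (1 + C α * X) ^ 2 * centralTrinomialSeries_sq_mul α β

end

open PowerSeries in
theorem stmt_19 (R : Type*) [CommRing R] (α β : R) :
    (2 * Dgen R α β - 1) ^ 2 *
        (1 - 2 * C α * X + C (α ^ 2 - 4 * β) * X ^ 2) =
      (1 + C α * X) ^ 2 ∧
    (2 * Dgen R 1 1 - 1) ^ 2 * (1 - 3 * X) = 1 + X := by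
  refine ⟨two_mul_Dgen_sub_one_sq_mul α β, ?_⟩
  -- at `α = β = 1` the quadratic factors as `(1 + X) (1 - 3X)`
  have h := two_mul_Dgen_sub_one_sq_mul (1 : R) 1
  rw [map_one, show (1 : R) ^ 2 - 4 * 1 = -3 by norm_num, map_neg, map_ofNat] at h
  have hu : IsUnit (1 + X : R⟦X⟧) := by simp [isUnit_iff_constantCoeff]
  refine hu.mul_left_cancel ?_
  linear_combination h
end
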